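/- arXiv:1802.00750 — 6 statements merged into one kernel-verified Lean document; each statement's English description precedes it below -/
import Mathlib

section
/- Let x, u_1, ..., u_s be distinct natural numbers, each less than 2^n, and let P be a finite set of prime numbers with |P| ≥ s·n/ε (where 0 < ε ≤ 1). Then for at least a (1-ε)-fraction of primes p in P, we have x mod p ∉ {u_1 mod p, ..., u_s mod p}. -/
open scoped Classical

lemma few_prime_factors (m n : ℕ) (hm : m ≠ 0) (h : m < 2 ^ n) :
    m.primeFactors.card ≤ n := by
  have h1 : (2 : ℕ) ^ m.primeFactors.card ≤ ∏ p ∈ m.primeFactors, p := by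
    rw [← Finset.prod_const]
    exact Finset.prod_le_prod' fun p hp => (Nat.prime_of_mem_primeFactors hp).two_le
  have h2 : ∏ p ∈ m.primeFactors, p ≤ m :=
    Nat.le_of_dvd (Nat.pos_of_ne_zero hm) (Nat.prod_primeFactors_dvd m)
  have : (2 : ℕ) ^ m.primeFactors.card < 2 ^ n := lt_of_le_of_lt (h1.trans h2) h
  have := (Nat.pow_lt_pow_iff_right (by norm_num : 1 < 2)).mp this
  omega

/-- If x, u_1, ..., u_s are distinct naturals below 2^n and P is a
finite set of primes with |P| ≥ s·n/ε, then for at least a (1-ε)-fraction of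
primes p ∈ P, x mod p differs from every u_i mod p. -/
theorem prime_hashing_fraction (n s : ℕ) (ε : ℝ) (hε : 0 < ε) (hε1 : ε ≤ 1)
    (x : ℕ) (u : Fin s → ℕ)
    (hx : x < 2 ^ n) (hu : ∀ i, u i < 2 ^ n)
    (hinj : Function.Injective u) (hne : ∀ i, u i ≠ x)
    (P : Finset ℕ) (hP : ∀ p ∈ P, p.Prime)
    (hcard : (s * n : ℝ) / ε ≤ P.card) :
    (1 - ε) * P.card ≤
      ((P.filter (fun p => ∀ i : Fin s, x % p ≠ u i % p)).card : ℝ) := by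
  set d : Fin s → ℕ := fun i => ((x : ℤ) - (u i : ℤ)).natAbs with hd
  have hd0 : ∀ i, d i ≠ 0 := by
    intro i h
    apply hne i
    have := Int.natAbs_eq_zero.mp h
    have : (x : ℤ) = u i := by linarith
    exact_mod_cast this.symm
  have hdlt : ∀ i, d i < 2 ^ n := by
    intro i
    have h1 := hx; have h2 := hu i
    simp only [hd]
    omega
  -- bad primes
  have hsub : P.filter (fun p => ¬ ∀ i : Fin s, x % p ≠ u i % p) ⊆
      (Finset.univ : Finset (Fin s)).biUnion (fun i => (d i).primeFactors) := by
    intro p hp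
    simp only [Finset.mem_filter, not_forall, not_not] at hp
    obtain ⟨hpP, i, hi⟩ := hp
    have hprime := hP p hpP
    have hdvd : p ∣ d i := by
      have hmq : Nat.ModEq p x (u i) := hi
      have h2 : (p : ℤ) ∣ (u i : ℤ) - x := hmq.dvd
      have h3 : (p : ℤ) ∣ (x : ℤ) - u i := dvd_sub_comm.mp h2
      have h4 := Int.natAbs_dvd_natAbs.mpr h3
      simpa [hd, Int.natAbs_natCast] using h4
    simp only [Finset.mem_biUnion, Finset.mem_univ, true_and]
    exact ⟨i, Nat.mem_primeFactors.mpr ⟨hprime, hdvd, hd0 i⟩⟩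
  have hbad : (P.filter (fun p => ¬ ∀ i : Fin s, x % p ≠ u i % p)).card ≤ s * n := by
    calc _ ≤ ((Finset.univ : Finset (Fin s)).biUnion (fun i => (d i).primeFactors)).card :=
          Finset.card_le_card hsub
      _ ≤ ∑ i : Fin s, (d i).primeFactors.card := Finset.card_biUnion_le
      _ ≤ ∑ _i : Fin s, n := Finset.sum_le_sum fun i _ => few_prime_factors _ n (hd0 i) (hdlt i)
      _ = s * n := by simp [Finset.sum_const, mul_comm]
  have hsplit := Finset.card_filter_add_card_filter_not
    (p := fun p => ∀ i : Fin s, x % p ≠ u i % p) (s := P)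
  have hsn : (s * n : ℝ) ≤ ε * P.card := by
    rw [div_le_iff₀ hε] at hcard
    linarith
  have hgood : (P.card : ℝ) - s * n ≤
      ((P.filter (fun p => ∀ i : Fin s, x % p ≠ u i % p)).card : ℝ) := by
    have : (P.filter (fun p => ∀ i : Fin s, x % p ≠ u i % p)).card +
        (P.filter (fun p => ¬ ∀ i : Fin s, x % p ≠ u i % p)).card = P.card := hsplit
    have hb : ((P.filter (fun p => ¬ ∀ i : Fin s, x % p ≠ u i % p)).card : ℝ) ≤ (s * n : ℕ) :=
      Nat.cast_le.mpr hbad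
    push_cast at hb ⊢
    have := congrArg (Nat.cast : ℕ → ℝ) this
    push_cast at this
    linarith
  linarith [hgood, hsn]
end

section
/- Let x be a vector in (Z/2Z)^n and S a finite set of vectors in (Z/2Z)^n not containing x, with |S| ≤ 2^k. Let r_1, ..., r_ℓ be chosen independently and uniformly at random from (Z/2Z)^n, with ℓ ≥ k + log₂(1/ε). Then with probability at least 1 - ε, for every y ∈ S there exists some i with ⟨y, r_i⟩ ≠ ⟨x, r_i⟩. -/
open Finset

lemma half_count (n : ℕ) (v : Fin n → ZMod 2) (hv : v ≠ 0) :
    2 * (univ.filter (fun r : Fin n → ZMod 2 => ∑ j, v j * r j = 0)).card = 2 ^ n := by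
  obtain ⟨j0, hj0⟩ : ∃ j0, v j0 ≠ 0 := by
    by_contra h; push_neg at h; exact hv (funext fun j => h j)
  have hone : ∀ a : ZMod 2, a ≠ 0 → a = 1 := by decide
  have hv1 : v j0 = 1 := hone _ hj0
  set A := univ.filter (fun r : Fin n → ZMod 2 => ∑ j, v j * r j = 0) with hA
  set B := univ.filter (fun r : Fin n → ZMod 2 => ¬ ∑ j, v j * r j = 0) with hB
  have key : ∀ r : Fin n → ZMod 2, ∑ j, v j * (Function.update r j0 (r j0 + 1)) j
      = (∑ j, v j * r j) + 1 := by
    intro r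
    have h1 : (fun j => v j * Function.update r j0 (r j0 + 1) j)
        = Function.update (fun j => v j * r j) j0 (v j0 * (r j0 + 1)) := by
      funext j
      by_cases h : j = j0
      · subst h; simp
      · simp [Function.update_of_ne h]
    rw [h1, Finset.sum_update_of_mem (mem_univ j0)]
    rw [show (∑ j, v j * r j) = v j0 * r j0 + ∑ j ∈ univ.erase j0, v j * r j from
      (Finset.add_sum_erase univ _ (mem_univ j0)).symm]
    ring_nf
    rw [hv1, Finset.erase_eq]
  have hAB : A.card = B.card := by
    refine Finset.card_bij' (fun r _ => Function.update r j0 (r j0 + 1))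
      (fun r _ => Function.update r j0 (r j0 + 1)) ?_ ?_ ?_ ?_
    · intro r hr
      simp only [hA, mem_filter, mem_univ, true_and] at hr
      simp only [hB, mem_filter, mem_univ, true_and, key r, hr]
      intro h; revert h
      generalize (∑ j, v j * r j) = a
      revert a; decide
    · intro r hr
      simp only [hB, mem_filter, mem_univ, true_and] at hr
      simp only [hA, mem_filter, mem_univ, true_and, key r]
      have h2 := hone _ hr
      rw [h2]; decide
    · intro r _
      funext j
      by_cases h : j = j0
      · subst h; simp [add_assoc]
        decide
      · simp [Function.update_of_ne h]
    · intro r _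
      funext j
      by_cases h : j = j0
      · subst h; simp [add_assoc]
        decide
      · simp [Function.update_of_ne h]
  have hsum : A.card + B.card = 2 ^ n := by
    rw [Finset.card_filter_add_card_filter_not]
    simp [Fintype.card_fun]
  omega

lemma tuple_count {α : Type*} [Fintype α] [DecidableEq α] (ℓ : ℕ) (p : α → Prop)
    [DecidablePred p] :
    (univ.filter (fun r : Fin ℓ → α => ∀ i, p (r i))).card = (univ.filter p).card ^ ℓ := by
  have h : univ.filter (fun r : Fin ℓ → α => ∀ i, p (r i))
      = Fintype.piFinset (fun _ : Fin ℓ => univ.filter p) := by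
    ext r; simp [Fintype.mem_piFinset]
  rw [h, Fintype.card_piFinset]
  simp


/-- x ∈ (Z/2Z)^n, S a finite set of vectors with x ∉ S and |S| ≤ 2^k.
For r_1,...,r_ℓ i.i.d. uniform on (Z/2Z)^n with 2^{-ℓ} ≤ ε·2^{-k}, with probability
at least 1-ε (over the tuple (r_1,...,r_ℓ)) every y ∈ S has some i with
⟨y,r_i⟩ ≠ ⟨x,r_i⟩. Probability is counted uniformly over all tuples. -/
theorem random_parities_separate (n k ℓ : ℕ) (ε : ℝ) (hε : 0 < ε) (hε1 : ε ≤ 1)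
    (hℓ : (2 : ℝ) ^ (-(ℓ : ℤ)) ≤ ε * (2 : ℝ) ^ (-(k : ℤ)))
    (x : Fin n → ZMod 2) (S : Finset (Fin n → ZMod 2))
    (hxS : x ∉ S) (hS : S.card ≤ 2 ^ k) :
    (1 - ε) * (Fintype.card (Fin ℓ → Fin n → ZMod 2)) ≤
      ((Finset.univ.filter (fun r : Fin ℓ → Fin n → ZMod 2 =>
          ∀ y ∈ S, ∃ i : Fin ℓ, ∑ j, y j * r i j ≠ ∑ j, x j * r i j)).card : ℝ) := by
  classical
  set G := Finset.univ.filter (fun r : Fin ℓ → Fin n → ZMod 2 =>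
      ∀ y ∈ S, ∃ i : Fin ℓ, ∑ j, y j * r i j ≠ ∑ j, x j * r i j) with hG
  set Bd := fun y : Fin n → ZMod 2 => Finset.univ.filter
      (fun r : Fin ℓ → Fin n → ZMod 2 => ∀ i, ∑ j, y j * r i j = ∑ j, x j * r i j) with hBd
  have hT : (Fintype.card (Fin ℓ → Fin n → ZMod 2)) = (2 ^ n) ^ ℓ := by
    simp [Fintype.card_fun]
  -- bad set count per y
  have hBdcard : ∀ y ∈ S, 2 ^ ℓ * (Bd y).card ≤ (2 ^ n) ^ ℓ := by
    intro y hy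
    have hyx : y ≠ x := fun h => hxS (h ▸ hy)
    have hv : (fun j => y j + x j) ≠ (0 : Fin n → ZMod 2) := by
      intro h
      apply hyx
      funext j
      have hj : y j + x j = 0 := congrFun h j
      have : ∀ a b : ZMod 2, a + b = 0 → a = b := by decide
      exact this _ _ hj
    have hhalf := half_count n (fun j => y j + x j) hv
    have hper : ∀ r : Fin n → ZMod 2,
        ((∑ j, y j * r j) = ∑ j, x j * r j) ↔ (∑ j, (y j + x j) * r j = 0) := by
      intro r
      rw [show (∑ j, (y j + x j) * r j) = (∑ j, y j * r j) + (∑ j, x j * r j) by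
        rw [← Finset.sum_add_distrib]; congr 1; funext j; ring]
      have : ∀ a b : ZMod 2, (a = b ↔ a + b = 0) := by decide
      exact this _ _
    have heq : (Bd y).card = (univ.filter
        (fun r : Fin n → ZMod 2 => ∑ j, (y j + x j) * r j = 0)).card ^ ℓ := by
      rw [hBd]
      have := tuple_count (α := Fin n → ZMod 2) ℓ
        (fun r => ∑ j, (y j + x j) * r j = 0)
      rw [← this]
      congr 1
      ext r
      simp only [mem_filter, mem_univ, true_and]
      exact forall_congr' (fun i => hper (r i))
    rw [heq]
    apply le_of_eq
    calc 2 ^ ℓ * (univ.filter (fun r : Fin n → ZMod 2 => ∑ j, (y j + x j) * r j = 0)).card ^ ℓ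
        = (2 * (univ.filter (fun r : Fin n → ZMod 2 => ∑ j, (y j + x j) * r j = 0)).card) ^ ℓ := by
          rw [mul_pow]
      _ = (2 ^ n) ^ ℓ := by rw [hhalf]
  -- complement
  have hcompl : univ.filter (fun r : Fin ℓ → Fin n → ZMod 2 =>
      ¬ ∀ y ∈ S, ∃ i : Fin ℓ, ∑ j, y j * r i j ≠ ∑ j, x j * r i j) ⊆ S.biUnion Bd := by
    intro r hr
    simp only [mem_filter, mem_univ, true_and] at hr
    push_neg at hr
    obtain ⟨y, hy, hall⟩ := hr
    exact Finset.mem_biUnion.mpr ⟨y, hy, mem_filter.mpr ⟨mem_univ r, hall⟩⟩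
  have hGcard : G.card + (S.biUnion Bd).card ≥ (2 ^ n) ^ ℓ := by
    have h1 : G.card + (univ.filter (fun r : Fin ℓ → Fin n → ZMod 2 =>
        ¬ ∀ y ∈ S, ∃ i : Fin ℓ, ∑ j, y j * r i j ≠ ∑ j, x j * r i j)).card
        = (2 ^ n) ^ ℓ := by
      rw [hG, Finset.card_filter_add_card_filter_not, Finset.card_univ, hT]
    have h2 := Finset.card_le_card hcompl
    exact le_trans (le_of_eq h1.symm) (Nat.add_le_add_left h2 _)
  have hbadbound : ((S.biUnion Bd).card : ℝ) ≤ ε * (2 ^ n) ^ ℓ := by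
    have h1 : (S.biUnion Bd).card ≤ ∑ y ∈ S, (Bd y).card := Finset.card_biUnion_le
    have h2 : ∀ y ∈ S, ((Bd y).card : ℝ) ≤ (2 ^ n : ℝ) ^ ℓ / 2 ^ ℓ := by
      intro y hy
      have := hBdcard y hy
      have := (Nat.cast_le (α := ℝ)).mpr this
      push_cast at this
      rw [le_div_iff₀ (by positivity)]
      linarith
    calc ((S.biUnion Bd).card : ℝ) ≤ ∑ y ∈ S, ((Bd y).card : ℝ) := by exact_mod_cast h1
      _ ≤ ∑ y ∈ S, ((2 ^ n : ℝ) ^ ℓ / 2 ^ ℓ) := Finset.sum_le_sum h2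
      _ = S.card * ((2 ^ n : ℝ) ^ ℓ / 2 ^ ℓ) := by rw [Finset.sum_const, nsmul_eq_mul]
      _ ≤ 2 ^ k * ((2 ^ n : ℝ) ^ ℓ / 2 ^ ℓ) := by
          apply mul_le_mul_of_nonneg_right _ (by positivity)
          exact_mod_cast hS
      _ ≤ ε * (2 ^ n : ℝ) ^ ℓ := by
          have hk : (2:ℝ) ^ k * (2:ℝ) ^ (-(ℓ:ℤ)) ≤ ε := by
            have := mul_le_mul_of_nonneg_left hℓ (by positivity : (0:ℝ) ≤ 2 ^ k)
            calc (2:ℝ) ^ k * (2:ℝ) ^ (-(ℓ:ℤ)) ≤ 2 ^ k * (ε * 2 ^ (-(k:ℤ))) := this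
              _ = ε * ((2:ℝ) ^ (k:ℤ) * 2 ^ (-(k:ℤ))) := by
                  rw [zpow_natCast]; ring
              _ = ε := by rw [← zpow_add₀ (by norm_num : (2:ℝ) ≠ 0)]; simp
          have hz : (2:ℝ) ^ (-(ℓ:ℤ)) = 1 / 2 ^ ℓ := by
            rw [zpow_neg, zpow_natCast]; simp
          rw [hz] at hk
          calc (2:ℝ) ^ k * ((2 ^ n : ℝ) ^ ℓ / 2 ^ ℓ)
              = ((2:ℝ)^k * (1 / 2^ℓ)) * (2^n:ℝ)^ℓ := by ring
            _ ≤ ε * (2 ^ n : ℝ) ^ ℓ := by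
                apply mul_le_mul_of_nonneg_right hk (by positivity)
  rw [hT]
  have hGge : ((2:ℝ) ^ n) ^ ℓ - ((S.biUnion Bd).card : ℝ) ≤ (G.card : ℝ) := by
    have := (Nat.cast_le (α := ℝ)).mpr hGcard
    push_cast at this
    linarith
  push_cast
  linarith
end

section
/- Let f : [N] × [D] → [M] be a (k, ε)-extractor and let S ⊆ [N] be any finite set. Then the number of elements of S that are ε-poor in S is strictly less than 2^k. -/
open scoped Classical

/-- Probability that f(X_A, X_D) ∈ B, where X_A is uniform on A and X_D uniform on [D]. -/
noncomputable def extractorPr {N D M : ℕ} (f : Fin N × Fin D → Fin M)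
    (A : Finset (Fin N)) (B : Finset (Fin M)) : ℝ :=
  ((A ×ˢ (Finset.univ : Finset (Fin D))).filter (fun q => f q ∈ B)).card
    / ((A.card : ℝ) * (D : ℝ))

/-- f is a (k,ε)-extractor: for every A ⊆ [N] with |A| ≥ 2^k and every B ⊆ [M],
|Pr[f(X_A,X_D) ∈ B] - |B|/M| ≤ ε. -/
def IsExtractor {N D M : ℕ} (k : ℕ) (ε : ℝ) (f : Fin N × Fin D → Fin M) : Prop :=
  ∀ A : Finset (Fin N), 2 ^ k ≤ A.card → ∀ B : Finset (Fin M),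
    |extractorPr f A B - (B.card : ℝ) / (M : ℝ)| ≤ ε

/-- y ∈ [M] is b-bad for S: |f⁻¹(y) ∩ S| > b·D·|S|/M, counting pairs (x,i) ∈ S×[D]. -/
def IsBad {N D M : ℕ} (f : Fin N × Fin D → Fin M) (S : Finset (Fin N))
    (b : ℝ) (y : Fin M) : Prop :=
  b * (D : ℝ) * (S.card : ℝ) / (M : ℝ) <
    (((S ×ˢ (Finset.univ : Finset (Fin D))).filter (fun q => f q = y)).card : ℝ)

/-- x ∈ S is ε-poor in S: for more than a 2ε-fraction of i ∈ [D],
f(x,i) is (1/ε)-bad for S. -/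
noncomputable def IsPoor {N D M : ℕ} (f : Fin N × Fin D → Fin M) (S : Finset (Fin N))
    (ε : ℝ) (x : Fin N) : Prop :=
  2 * ε * (D : ℝ) <
    ((Finset.univ.filter (fun i : Fin D => IsBad f S (1 / ε) (f (x, i)))).card : ℝ)

/-!
Let `B` be the set of `(1/ε)`-bad outputs. By Markov's inequality for the fibres of `f` on
`S × [D]`, at most an `ε`-fraction of `[M]` is bad, so `|B|/M ≤ ε`. On the other hand, on the set
`A` of poor elements, `f(X_A, X_D)` lands in `B` with probability more than `2ε`. If `|A| ≥ 2^k`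
this deviation of more than `ε` contradicts the extractor property.
-/

open Finset

theorem Finset.card_filter_lt_card_fiber_mul_le {α β : Type*} [DecidableEq β]
    (s : Finset α) (g : α → β) (T : Finset β) (t : ℝ) :
    (#{y ∈ T | t < #{a ∈ s | g a = y}} : ℝ) * t ≤ #s := by
  set B := {y ∈ T | t < (#{a ∈ s | g a = y} : ℝ)}
  calc (#B : ℝ) * t = ∑ _y ∈ B, t := by rw [sum_const, nsmul_eq_mul]
    _ ≤ ∑ y ∈ B, (#{a ∈ s | g a = y} : ℝ) := sum_le_sum fun y hy => (mem_filter.1 hy).2.le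
    _ = #{a ∈ s | g a ∈ B} := by exact_mod_cast sum_card_fiberwise_eq_card_filter s B g
    _ ≤ #s := by exact_mod_cast card_filter_le s _

theorem Finset.card_filter_product {α β : Type*} (s : Finset α) (t : Finset β)
    (p : α × β → Prop) [DecidablePred p] :
    #{q ∈ s ×ˢ t | p q} = ∑ x ∈ s, #{y ∈ t | p (x, y)} := by
  simp only [card_filter, sum_product]

section Extractor

variable {N D M : ℕ} (f : Fin N × Fin D → Fin M)

theorem lt_extractorPr_of_forall_lt {A : Finset (Fin N)} (hA : A.Nonempty) (B : Finset (Fin M))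
    {c : ℝ} (hc : ∀ x ∈ A, c * D < #{i | f (x, i) ∈ B}) : c < extractorPr f A B := by
  obtain ⟨x₀, hx₀⟩ := hA
  have hD : 0 < D := by
    by_contra! hD0
    obtain rfl : D = 0 := by omega
    simpa using hc x₀ hx₀
  have hAD : (0 : ℝ) < #A * D := by
    have : 0 < #A := card_pos.2 ⟨x₀, hx₀⟩
    positivity
  rw [extractorPr, lt_div_iff₀ hAD, card_filter_product, Nat.cast_sum]
  calc c * (#A * D) = ∑ _x ∈ A, c * D := by rw [sum_const, nsmul_eq_mul]; ring
    _ < _ := sum_lt_sum_of_nonempty ⟨x₀, hx₀⟩ hc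

theorem card_isBad_div_le (S : Finset (Fin N)) {ε : ℝ} (hε : 0 < ε) :
    (#{y | IsBad f S (1 / ε) y} : ℝ) / M ≤ ε := by
  set B : Finset (Fin M) := {y | IsBad f S (1 / ε) y}
  rcases Nat.eq_zero_or_pos (#S * D) with hSD | hSD
  · suffices B = ∅ by simp [this, hε.le]
    refine filter_eq_empty_iff.2 fun y _ hy => ?_
    have hfiber : #{q ∈ S ×ˢ univ | f q = y} = 0 := Nat.le_zero.1 <| by
      simpa [hSD] using card_filter_le (S ×ˢ univ) (fun q => f q = y)
    have hSD' : (#S : ℝ) * D = 0 := by exact_mod_cast hSD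
    simp [IsBad, hfiber, mul_assoc, mul_comm (D : ℝ), hSD'] at hy
  · have hmarkov := card_filter_lt_card_fiber_mul_le (S ×ˢ univ) f univ (1 / ε * D * #S / M)
    rw [card_product, card_univ, Fintype.card_fin] at hmarkov
    have hSD' : (0 : ℝ) < #S * D := by exact_mod_cast hSD
    rcases Nat.eq_zero_or_pos M with rfl | hM
    · simpa using hε.le
    have hM' : (0 : ℝ) < M := by exact_mod_cast hM
    rw [div_le_iff₀ hM']
    have : (#B : ℝ) * (#S * D) ≤ ε * M * (#S * D) := by
      calc (#B : ℝ) * (#S * D) = ε * M * (#B * (1 / ε * D * #S / M)) := by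
            field_simp
        _ ≤ ε * M * (#S * D) := by
            refine mul_le_mul_of_nonneg_left ?_ (by positivity)
            exact_mod_cast hmarkov
    exact le_of_mul_le_mul_right this hSD'

end Extractor

theorem extractor_few_poor_general (N D M k : ℕ) (ε : ℝ) (hε : 0 < ε)
    (f : Fin N × Fin D → Fin M) (hf : IsExtractor k ε f) (S : Finset (Fin N)) :
    (S.filter (IsPoor f S ε)).card < 2 ^ k := by
  by_contra! hbig
  set A := S.filter (IsPoor f S ε)
  set B : Finset (Fin M) := {y | IsBad f S (1 / ε) y}
  have hA : A.Nonempty := card_pos.1 (lt_of_lt_of_le (Nat.two_pow_pos k) hbig)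
  have hPr : 2 * ε < extractorPr f A B :=
    lt_extractorPr_of_forall_lt f hA B fun x hx => by
      have hpoor : IsPoor f S ε x := (mem_filter.1 hx).2
      rw [IsPoor] at hpoor
      convert hpoor using 4
      simp only [B, mem_filter, mem_univ, true_and]
  have hB := card_isBad_div_le f S hε
  have hdev := (abs_le.1 (hf A hbig B)).2
  linarith

/-- For a (k,ε)-extractor f and any S ⊆ [N] (with 0 < ε ≤ 1/2),
fewer than 2^k elements of S are ε-poor in S. -/
theorem extractor_few_poor (N D M k : ℕ) (ε : ℝ) (hε : 0 < ε) (hε2 : ε ≤ 1 / 2)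
    (f : Fin N × Fin D → Fin M) (hf : IsExtractor k ε f) (S : Finset (Fin N)) :
    (S.filter (IsPoor f S ε)).card < 2 ^ k :=
  extractor_few_poor_general N D M k ε hε f hf S
end

section
/- For every string x and every string y, C(x) ≤ C(x | C(x)) + O(1), where C denotes plain Kolmogorov complexity; more precisely, there is a constant c such that for all x, C(x) ≤ C(x | C(x)) + c. -/
/-- An optimal universal machine for plain conditional Kolmogorov complexity.
`V` takes (the pairing of) a program `p` and a condition `z` (both encoded as
natural numbers, standing for binary strings via `Nat.size`-bit encodings) and
may output a string `x`. Optimality: every partial computable machine is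
simulated with only a constant additive overhead in program length. -/
structure OptimalMachine where
  V : ℕ →. ℕ
  partrec : Nat.Partrec V
  optimal : ∀ V' : ℕ →. ℕ, Nat.Partrec V' → ∃ c : ℕ, ∀ p z x : ℕ,
    x ∈ V' (Nat.pair p z) → ∃ q : ℕ, x ∈ V (Nat.pair q z) ∧
      Nat.size q ≤ Nat.size p + c

/-- Plain conditional Kolmogorov complexity C(x|z): the least bit-length of a
program p with U(p, z) = x. -/
noncomputable def KC (U : OptimalMachine) (x z : ℕ) : ℕ :=
  sInf {L | ∃ p : ℕ, x ∈ U.V (Nat.pair p z) ∧ Nat.size p = L}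

/-! Let `n = C(x)` and let `p` be a shortest program for `x` given `n`. From `p` and
`d = n - |p|` one recovers `n = |p| + d`, so a self-delimiting description of `d` followed by
`p` is an unconditional program for `x`, giving `n ≤ |p| + 2 log d + O(1)`. Hence
`d ≤ 2 log d + O(1)`, which bounds `d` by a constant. -/

open Function Nat

theorem Nat.size_eq_iff {n s : ℕ} : size n = s ↔ n < 2 ^ s ∧ 2 ^ s ≤ 2 * n + 1 := by
  constructor
  · rintro rfl
    refine ⟨lt_size_self n, ?_⟩
    rcases Nat.eq_zero_or_pos n with rfl | hn
    · simp
    · obtain ⟨t, ht⟩ := Nat.exists_eq_succ_of_ne_zero (size_pos.2 hn).ne'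
      have : 2 ^ t ≤ n := lt_size.1 (by omega)
      rw [ht, pow_succ]
      omega
  · rintro ⟨hlt, hle⟩
    refine le_antisymm (size_le.2 hlt) (Nat.lt_succ_iff.1 ?_)
    rw [← Nat.pow_lt_pow_iff_right (by norm_num : 1 < 2), pow_succ]
    have := lt_size_self n
    omega

theorem Nat.four_mul_size_le (d : ℕ) : 4 * size d ≤ d + 8 := by
  have key : ∀ t, 4 * (t + 1) ≤ 2 ^ t + 8 := by
    intro t
    induction t with
    | zero => norm_num
    | succ t ih =>
      rcases Nat.lt_or_ge t 2 with ht | ht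
      · interval_cases t <;> norm_num
      · have : 4 ≤ 2 ^ t := by simpa using Nat.pow_le_pow_right two_pos ht
        rw [pow_succ]
        omega
  rcases Nat.eq_zero_or_pos d with rfl | hd
  · simp
  obtain ⟨t, ht⟩ := Nat.exists_eq_succ_of_ne_zero (size_pos.2 hd).ne'
  have : 2 ^ t ≤ d := lt_size.1 (by omega)
  have := key t
  omega

theorem Nat.le_of_le_two_mul_size_add {d c : ℕ} (h : d ≤ 2 * size d + c) : d ≤ 2 * c + 8 := by
  have := four_mul_size_le d
  omega

theorem Primrec.nat_pow : Primrec₂ ((· ^ ·) : ℕ → ℕ → ℕ) :=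
  Primrec₂.unpaired'.1 Nat.Primrec.pow

theorem Primrec.nat_size : Primrec size := by
  refine Primrec.of_graph ⟨id, Primrec.id, fun n => ?_⟩ ?_
  · exact size_le.2 n.lt_two_pow_self
  · have hpow : Primrec fun a : ℕ × ℕ => 2 ^ a.2 := nat_pow.comp (const 2) snd
    exact (PrimrecPred.and (nat_lt.comp fst hpow)
      (nat_le.comp hpow (succ.comp (nat_mul.comp (const 2) fst)))).of_eq
        fun a => size_eq_iff.symm

theorem Nat.padicValNat_two_odd_mul_two_pow (m k : ℕ) :
    padicValNat 2 ((2 * m + 1) * 2 ^ k) = k := by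
  rw [padicValNat.mul (by omega) (by positivity), padicValNat.prime_pow,
    padicValNat.eq_zero_of_not_dvd (by omega), zero_add]

theorem Nat.eq_and_eq_of_mul_add_eq {n a b a' b' : ℕ} (hb : b < n) (hb' : b' < n)
    (h : a * n + b = a' * n + b') : a = a' ∧ b = b' := by
  have hn : 0 < n := by omega
  have hdiv : (a * n + b) / n = a := by
    rw [Nat.add_comm, Nat.add_mul_div_right _ _ hn, Nat.div_eq_of_lt hb, zero_add]
  have hdiv' : (a' * n + b') / n = a' := by
    rw [Nat.add_comm, Nat.add_mul_div_right _ _ hn, Nat.div_eq_of_lt hb', zero_add]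
  have ha : a = a' := by rw [← hdiv, ← hdiv', h]
  subst ha
  exact ⟨rfl, by omega⟩

/-- The binary expansion of `p`, then `d` in `size d` bits, then a `1`, then `size d` zeros. -/
def selfDelimitedPair (d p : ℕ) : ℕ :=
  (2 * (p * 2 ^ size d + d) + 1) * 2 ^ size d

theorem selfDelimitedPair_injective : Injective2 selfDelimitedPair := by
  intro d d' p p' h
  unfold selfDelimitedPair at h
  have hk : size d = size d' := by
    simpa only [Nat.padicValNat_two_odd_mul_two_pow] using congrArg (padicValNat 2) h
  rw [← hk] at h
  have h' : p * 2 ^ size d + d = p' * 2 ^ size d + d' := by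
    have := Nat.eq_of_mul_eq_mul_right (by positivity) h
    omega
  obtain ⟨hp, hd⟩ := Nat.eq_and_eq_of_mul_add_eq (lt_size_self d) (hk ▸ lt_size_self d') h'
  exact ⟨hd, hp⟩

theorem size_selfDelimitedPair_le (d p : ℕ) :
    size (selfDelimitedPair d p) ≤ size p + 2 * size d + 1 := by
  have hp := lt_size_self p
  have hd := lt_size_self d
  rw [size_le, selfDelimitedPair,
    show size p + 2 * size d + 1 = (size p + size d + 1) + size d by ring, pow_add]
  refine Nat.mul_lt_mul_of_pos_right ?_ (by positivity)
  have : p * 2 ^ size d + d < 2 ^ (size p + size d) := by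
    rw [pow_add]
    nlinarith
  rw [pow_succ]
  omega

theorem Primrec.selfDelimitedPair : Primrec₂ selfDelimitedPair := by
  have hpow : Primrec fun a : ℕ × ℕ => 2 ^ size a.1 :=
    nat_pow.comp (const 2) (nat_size.comp fst)
  exact nat_mul.comp (succ.comp (nat_mul.comp (const 2)
    (nat_add.comp (nat_mul.comp snd hpow) fst))) hpow

theorem Nat.mem_rfind_decide_eq_of_injective {f : ℕ → ℕ} (hf : Injective f) (j : ℕ) :
    j ∈ Nat.rfind fun i => Part.some (decide (f i = f j)) :=
  Nat.mem_rfind.2 ⟨by simp, fun hij => by simpa using hf.ne hij.ne⟩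

namespace OptimalMachine

/-- On input `⟨selfDelimitedPair d p, z⟩`, run `U` on program `p` with condition
`size p + d`. -/
def runWithSizeOffset (U : OptimalMachine) : ℕ →. ℕ := fun i =>
  (Nat.rfind fun j =>
      Part.some (decide (uncurry selfDelimitedPair j.unpair = i.unpair.1))).bind
    fun j => U.V (Nat.pair j.unpair.2 (size j.unpair.2 + j.unpair.1))

theorem mem_runWithSizeOffset (U : OptimalMachine) {x d p : ℕ} (z : ℕ)
    (hx : x ∈ U.V (Nat.pair p (size p + d))) :
    x ∈ U.runWithSizeOffset (Nat.pair (selfDelimitedPair d p) z) := by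
  have hinj : Injective (uncurry selfDelimitedPair ∘ Nat.unpair) :=
    selfDelimitedPair_injective.uncurry.comp Nat.pairEquiv.symm.injective
  have hfind := Nat.mem_rfind_decide_eq_of_injective hinj (Nat.pair d p)
  simp only [comp_apply, Nat.unpair_pair, uncurry_apply_pair] at hfind
  refine Part.mem_bind_iff.2 ⟨Nat.pair d p, ?_, ?_⟩
  · simpa only [Nat.unpair_pair] using hfind
  · simpa only [Nat.unpair_pair] using hx

open Primrec in
theorem partrec_runWithSizeOffset (U : OptimalMachine) : Nat.Partrec U.runWithSizeOffset := by
  have hcode : Primrec fun j : ℕ => uncurry selfDelimitedPair j.unpair :=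
    Primrec.selfDelimitedPair.comp (fst.comp unpair) (snd.comp unpair)
  have hsearch :
      Primrec₂ fun (i j : ℕ) => decide (uncurry selfDelimitedPair j.unpair = i.unpair.1) :=
    (Primrec.eq.comp (hcode.comp snd) (fst.comp (unpair.comp fst))).decide
  have hcall :
      Primrec fun a : ℕ × ℕ => Nat.pair a.2.unpair.2 (size a.2.unpair.2 + a.2.unpair.1) :=
    Primrec₂.natPair.comp (snd.comp (unpair.comp snd))
      (nat_add.comp (nat_size.comp (snd.comp (unpair.comp snd))) (fst.comp (unpair.comp snd)))
  exact Partrec.nat_iff.1 (Partrec.bind (Partrec.rfind hsearch.to_comp.partrec₂)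
    ((Partrec.nat_iff.2 U.partrec).comp hcall.to_comp))

end OptimalMachine

theorem KC_le_size_of_mem (U : OptimalMachine) {x z p : ℕ} (h : x ∈ U.V (Nat.pair p z)) :
    KC U x z ≤ size p :=
  Nat.sInf_le ⟨p, h, rfl⟩

theorem exists_program_size_eq_KC (U : OptimalMachine) (x z : ℕ) :
    ∃ p, x ∈ U.V (Nat.pair p z) ∧ size p = KC U x z := by
  have hprint : Nat.Partrec fun i => Part.some i.unpair.1 :=
    Partrec.nat_iff.1 (Primrec.fst.comp Primrec.unpair).to_comp.partrec
  obtain ⟨c, hc⟩ := U.optimal _ hprint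
  obtain ⟨q, hq, -⟩ := hc x z x (by simp)
  exact Nat.sInf_mem (s := {L | ∃ p, x ∈ U.V (Nat.pair p z) ∧ size p = L})
    ⟨size q, q, hq, rfl⟩

theorem exists_KC_le_size_add_two_mul_size (U : OptimalMachine) :
    ∃ c, ∀ x d p, x ∈ U.V (Nat.pair p (size p + d)) →
      KC U x 0 ≤ size p + 2 * size d + c := by
  obtain ⟨c, hc⟩ := U.optimal _ U.partrec_runWithSizeOffset
  refine ⟨c + 1, fun x d p hx => ?_⟩
  obtain ⟨q, hq, hqsize⟩ := hc _ 0 x (U.mem_runWithSizeOffset 0 hx)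
  have := size_selfDelimitedPair_le d p
  have := KC_le_size_of_mem U hq
  omega

/-- C(x) ≤ C(x | C(x)) + O(1): there is a constant c such that for
every string x, C(x) ≤ C(x | C(x)) + c (unconditional complexity is complexity
conditional on the empty string, encoded as 0). -/
theorem complexity_le_conditional_on_own_complexity (U : OptimalMachine) :
    ∃ c : ℕ, ∀ x : ℕ, KC U x 0 ≤ KC U x (KC U x 0) + c := by
  obtain ⟨c, hc⟩ := exists_KC_le_size_add_two_mul_size U
  refine ⟨2 * c + 8, fun x => ?_⟩
  obtain ⟨p, hp, hsize⟩ := exists_program_size_eq_KC U x (KC U x 0)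
  rcases le_or_gt (KC U x 0) (size p) with hle | hlt
  · omega
  obtain ⟨d, hd⟩ := Nat.exists_eq_add_of_le hlt.le
  have hbound := hc x d p (hd ▸ hp)
  have := Nat.le_of_le_two_mul_size_add (d := d) (c := c) (by omega)
  omega
end

section
/- Let x < 2^n and let U be a set of at most 2^b natural numbers below 2^n with x ∉ U. If p is chosen uniformly at random from a set P of primes with |P| ≥ 2^b·n/ε, then with probability at least 1 − ε, x is the unique element of U ∪ {x} congruent to x mod p. -/
open scoped Classical

lemma card_primeFactors_le_of_lt_two_pow (n d : ℕ) (hd : d ≠ 0) (h : d < 2 ^ n) :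
    d.primeFactors.card ≤ n := by
  have h1 : (2 : ℕ) ^ d.primeFactors.card ≤ ∏ p ∈ d.primeFactors, p := by
    apply Finset.pow_card_le_prod
    intro p hp
    exact (Nat.prime_of_mem_primeFactors hp).two_le
  have h2 : ∏ p ∈ d.primeFactors, p ≤ d :=
    Nat.le_of_dvd (Nat.pos_of_ne_zero hd) (Nat.prod_primeFactors_dvd d)
  have : (2:ℕ) ^ d.primeFactors.card < 2 ^ n := lt_of_le_of_lt (h1.trans h2) h
  exact le_of_lt (Nat.pow_lt_pow_iff_right one_lt_two |>.mp this)

lemma dvd_dist_of_mod_eq (p x u : ℕ) (h : u % p = x % p) : p ∣ Nat.dist x u := by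
  have hm : x ≡ u [MOD p] := h.symm
  rcases le_total x u with hle | hle
  · rw [Nat.dist_eq_sub_of_le hle]
    exact (Nat.modEq_iff_dvd' hle).mp hm
  · rw [Nat.dist_eq_sub_of_le_right hle]
    exact (Nat.modEq_iff_dvd' hle).mp hm.symm

/-- Let x < 2^n and U a set of at most 2^b naturals below 2^n not
containing x. If p is uniform over a set P of primes with |P| ≥ 2^b·n/ε, then
with probability at least 1−ε no u ∈ U is congruent to x mod p, i.e. x is the
unique element of U ∪ {x} congruent to x mod p. -/
theorem unique_residue_whp (n b : ℕ) (ε : ℝ) (hε : 0 < ε) (hε1 : ε ≤ 1)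
    (x : ℕ) (hx : x < 2 ^ n)
    (U : Finset ℕ) (hU : ∀ u ∈ U, u < 2 ^ n) (hxU : x ∉ U) (hUcard : U.card ≤ 2 ^ b)
    (P : Finset ℕ) (hP : ∀ p ∈ P, p.Prime)
    (hcard : (2 : ℝ) ^ b * n / ε ≤ P.card) :
    (1 - ε) * P.card ≤
      ((P.filter (fun p => ∀ u ∈ U, u % p ≠ x % p)).card : ℝ) := by
  set Good := P.filter (fun p => ∀ u ∈ U, u % p ≠ x % p) with hGood
  set Bad := P.filter (fun p => ¬ ∀ u ∈ U, u % p ≠ x % p) with hBad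
  have hsplit : Good.card + Bad.card = P.card :=
    Finset.card_filter_add_card_filter_not _
  -- Bad is contained in the union of prime factors of distances
  have hsub : Bad ⊆ U.biUnion (fun u => (Nat.dist x u).primeFactors) := by
    intro p hp
    rw [hBad, Finset.mem_filter] at hp
    obtain ⟨hpP, hnot⟩ := hp
    push_neg at hnot
    obtain ⟨u, huU, hmod⟩ := hnot
    apply Finset.mem_biUnion.mpr
    refine ⟨u, huU, ?_⟩
    rw [Nat.mem_primeFactors]
    refine ⟨hP p hpP, dvd_dist_of_mod_eq p x u hmod, ?_⟩
    have hne : x ≠ u := fun hc => hxU (hc ▸ huU)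
    simp only [Nat.dist]
    omega
  have hBadcard : Bad.card ≤ 2 ^ b * n := by
    calc Bad.card ≤ (U.biUnion (fun u => (Nat.dist x u).primeFactors)).card :=
          Finset.card_le_card hsub
      _ ≤ ∑ u ∈ U, (Nat.dist x u).primeFactors.card := Finset.card_biUnion_le
      _ ≤ ∑ u ∈ U, n := by
          apply Finset.sum_le_sum
          intro u huU
          apply card_primeFactors_le_of_lt_two_pow
          · have hne : x ≠ u := fun hc => hxU (hc ▸ huU)
            simp only [Nat.dist]; omega
          · have := hU u huU
            simp only [Nat.dist]; omega
      _ = U.card * n := by rw [Finset.sum_const, smul_eq_mul]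
      _ ≤ 2 ^ b * n := Nat.mul_le_mul_right n hUcard
  -- real arithmetic
  have hεP : (2:ℝ) ^ b * n ≤ ε * P.card := by
    rw [div_le_iff₀ hε] at hcard
    linarith [hcard]
  have hBadR : (Bad.card : ℝ) ≤ ε * P.card := by
    calc (Bad.card : ℝ) ≤ ((2 ^ b * n : ℕ) : ℝ) := by exact_mod_cast hBadcard
      _ = (2:ℝ) ^ b * n := by push_cast; ring
      _ ≤ ε * P.card := hεP
  have : (Good.card : ℝ) = (P.card : ℝ) - Bad.card := by
    rw [← hsplit]; push_cast; ring
  rw [this]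
  nlinarith [hBadR]
end

section
/- Two-source success amplification for modular hashing: let x < 2^n, and let D be a (deterministic) procedure that, given w and a pair (p, r) with p prime, searches the (at most 2^b) strings u of length n with C(u | w) < b and outputs the first one with u ≡ r (mod p). If C(x | w) < b and p is uniform over a set P of primes with |P| ≥ 2^b·n/ε, then D(w, (p, x mod p)) = x with probability at least 1 − ε. -/
open scoped Classical

/-!
A prime `p` can make the search return some `u ≠ x` only if `u ≡ x (mod p)` for one of the
fewer than `2 ^ b` strings `u` with `C(u | w) < b`, i.e. only if `p` divides the nonzero
number `|x - u| < 2 ^ n`, which has at most `n` prime factors. So at most `2 ^ b * n ≤ ε |P|`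
primes of `P` are bad.
-/

open Finset

namespace OptimalMachine

variable (U : OptimalMachine)

/-- Every string has a program: simulate the machine that ignores its input and prints it. -/
theorem exists_program (u w : ℕ) : ∃ p, u ∈ U.V (Nat.pair p w) := by
  obtain ⟨c, hc⟩ := U.optimal (fun _ => Part.some u) (.of_primrec (.const u))
  obtain ⟨q, hq, -⟩ := hc 0 w u (Part.mem_some u)
  exact ⟨q, hq⟩

theorem exists_program_lt_of_KC_lt {u w b : ℕ} (h : KC U u w < b) :
    ∃ p < 2 ^ b, u ∈ U.V (Nat.pair p w) := by
  obtain ⟨p, hp⟩ := U.exists_program u w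
  obtain ⟨q, hq, hsize⟩ := Nat.sInf_mem (s := {L | ∃ p, u ∈ U.V (Nat.pair p w) ∧ p.size = L})
    ⟨_, p, hp, rfl⟩
  exact ⟨q, Nat.size_le.mp (hsize.trans_lt h).le, hq⟩

theorem card_filter_KC_lt_le (s : Finset ℕ) (w b : ℕ) :
    #{u ∈ s | KC U u w < b} ≤ 2 ^ b := by
  choose! q hq_lt hq_mem using fun u (hu : KC U u w < b) => U.exists_program_lt_of_KC_lt hu
  have hinj : Set.InjOn q ({u ∈ s | KC U u w < b} : Finset ℕ) := fun u hu v hv huv =>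
    Part.mem_unique (hq_mem u (mem_filter.mp hu).2) (huv ▸ hq_mem v (mem_filter.mp hv).2)
  simpa using card_le_card_of_injOn q (t := range (2 ^ b))
    (fun u hu => mem_range.mpr (hq_lt u (mem_filter.mp hu).2)) hinj

end OptimalMachine

theorem Nat.card_primeFactors_lt_of_lt_two_pow {m k : ℕ} (hm : m ≠ 0) (h : m < 2 ^ k) :
    #m.primeFactors < k := by
  have h2 : 2 ^ #m.primeFactors ≤ m :=
    calc 2 ^ #m.primeFactors ≤ ∏ p ∈ m.primeFactors, p := by
          rw [← prod_const]
          exact prod_le_prod' fun p hp => (prime_of_mem_primeFactors hp).two_le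
      _ ≤ m := le_of_dvd (pos_of_ne_zero hm) (prod_primeFactors_dvd m)
  exact (Nat.pow_lt_pow_iff_right (by norm_num)).mp (h2.trans_lt h)

theorem Nat.ModEq.mem_primeFactors_natAbs_sub {p u x : ℕ} (hp : p.Prime) (h : u ≡ x [MOD p])
    (hne : u ≠ x) : p ∈ ((x : ℤ) - u).natAbs.primeFactors :=
  mem_primeFactors.mpr ⟨hp, Int.natCast_dvd.mp h.dvd, by omega⟩

theorem card_filter_exists_modEq_le {n x : ℕ} {S P : Finset ℕ} (hP : ∀ p ∈ P, p.Prime)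
    (hS : ∀ u ∈ S, u < 2 ^ n) (hx : x < 2 ^ n) :
    #{p ∈ P | ∃ u ∈ S, u ≠ x ∧ u ≡ x [MOD p]} ≤ #S * n := by
  have hcover : {p ∈ P | ∃ u ∈ S, u ≠ x ∧ u ≡ x [MOD p]} ⊆
      S.biUnion fun u => ((x : ℤ) - u).natAbs.primeFactors := by
    intro p hp
    obtain ⟨hpP, u, hu, hne, hmod⟩ := mem_filter.mp hp
    exact mem_biUnion.mpr ⟨u, hu, hmod.mem_primeFactors_natAbs_sub (hP p hpP) hne⟩
  calc _ ≤ #(S.biUnion fun u => ((x : ℤ) - u).natAbs.primeFactors) := card_le_card hcover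
    _ ≤ ∑ u ∈ S, #((x : ℤ) - u).natAbs.primeFactors := card_biUnion_le
    _ ≤ ∑ _u ∈ S, n := sum_le_sum fun u hu => by
        have hu_lt := hS u hu
        rcases eq_or_ne ((x : ℤ) - u).natAbs 0 with h0 | h0
        · simp [h0]
        · exact (Nat.card_primeFactors_lt_of_lt_two_pow h0 (by omega)).le
    _ = #S * n := by rw [sum_const, smul_eq_mul]

theorem modular_hashing_decompression_general (U : OptimalMachine)
    (n b x w : ℕ) (ε : ℝ) (hε : 0 < ε)
    (hx : x < 2 ^ n)
    (P : Finset ℕ) (hP : ∀ p ∈ P, p.Prime)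
    (hcard : (2 : ℝ) ^ b * n / ε ≤ P.card) :
    (1 - ε) * P.card ≤
      ((P.filter (fun p => ∀ u : ℕ, u < 2 ^ n → KC U u w < b →
          u % p = x % p → u = x)).card : ℝ) := by
  set good := fun p => ∀ u : ℕ, u < 2 ^ n → KC U u w < b → u % p = x % p → u = x
  set S := {u ∈ range (2 ^ n) | KC U u w < b}
  have hbad : #{p ∈ P | ¬ good p} ≤ 2 ^ b * n :=
    calc #{p ∈ P | ¬ good p} ≤ #{p ∈ P | ∃ u ∈ S, u ≠ x ∧ u ≡ x [MOD p]} :=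
          card_le_card <| monotone_filter_right P fun p _ hp => by
            simp only [good, S, not_forall, mem_filter, mem_range] at hp ⊢
            obtain ⟨u, hun, hub, hmod, hne⟩ := hp
            exact ⟨u, ⟨hun, hub⟩, hne, hmod⟩
      _ ≤ #S * n := card_filter_exists_modEq_le hP (fun u hu => mem_range.mp (mem_filter.mp hu).1) hx
      _ ≤ 2 ^ b * n := Nat.mul_le_mul_right n (U.card_filter_KC_lt_le _ w b)
  have hsplit := card_filter_add_card_filter_not (s := P) good
  have hεP : (2 : ℝ) ^ b * n ≤ #P * ε := (div_le_iff₀ hε).mp hcard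
  have hbadR : (#{p ∈ P | ¬ good p} : ℝ) ≤ 2 ^ b * n := by exact_mod_cast hbad
  have hsplitR : (#{p ∈ P | good p} : ℝ) + #{p ∈ P | ¬ good p} = #P := by exact_mod_cast hsplit
  linarith

/-- Modular hashing decompression succeeds with probability 1−ε.
If x < 2^n has C(x|w) < b and p is uniform over a set P of primes with
|P| ≥ 2^b·n/ε, then with probability at least 1−ε the string x is the unique
u < 2^n with C(u|w) < b and u ≡ x (mod p) — hence the search procedure D, which
outputs the first such u congruent to x mod p, returns x. -/
theorem modular_hashing_decompression (U : OptimalMachine)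
    (n b x w : ℕ) (ε : ℝ) (hε : 0 < ε) (hε1 : ε ≤ 1)
    (hx : x < 2 ^ n) (hxb : KC U x w < b)
    (P : Finset ℕ) (hP : ∀ p ∈ P, p.Prime)
    (hcard : (2 : ℝ) ^ b * n / ε ≤ P.card) :
    (1 - ε) * P.card ≤
      ((P.filter (fun p => ∀ u : ℕ, u < 2 ^ n → KC U u w < b →
          u % p = x % p → u = x)).card : ℝ) :=
  modular_hashing_decompression_general U n b x w ε hε hx P hP hcard
end
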